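/- For k ≥ 2, the number of k-noncrossing RNA structures on {1,...,n} satisfies T_{k,1}(n, (n-ℓ)/2) = Σ_{b=0}^{⌊n/2⌋} (-1)^b C(n-b, b) f_k(n-2b, ℓ), where T_{k,1}(n,h) counts k-noncrossing partial matchings with no 1-arcs having h arcs and ℓ = n - 2h isolated vertices, and f_k(m,ℓ) counts k-noncrossing partial matchings of {1,...,m} with ℓ isolated vertices (1-arcs allowed). -/

import Mathlib

open Finset

/-- A partial matching on the vertex set {1,…,n}: a set of arcs (i,j) with
1 ≤ i < j ≤ n in which every vertex has degree ≤ 1. -/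
def IsPartialMatching (n : ℕ) (A : Finset (ℕ × ℕ)) : Prop :=
  (∀ p ∈ A, 1 ≤ p.1 ∧ p.1 < p.2 ∧ p.2 ≤ n) ∧
  (∀ p ∈ A, ∀ q ∈ A, p ≠ q → p.1 ≠ q.1 ∧ p.1 ≠ q.2 ∧ p.2 ≠ q.1 ∧ p.2 ≠ q.2)

/-- `A` contains `k` mutually crossing arcs, i.e. arcs
(i₁,j₁),…,(i_k,j_k) with i₁ < … < i_k < j₁ < … < j_k. -/
def HasKCrossing (k : ℕ) (A : Finset (ℕ × ℕ)) : Prop :=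
  ∃ f : Fin k → ℕ × ℕ, (∀ t, f t ∈ A) ∧
    StrictMono (fun t => (f t).1) ∧ StrictMono (fun t => (f t).2) ∧
    ∀ s t : Fin k, (f s).1 < (f t).2

/-- no arc of the form (i, i+1): minimum arc-length ≥ 2. -/
def NoOneArc (A : Finset (ℕ × ℕ)) : Prop := ∀ p ∈ A, p.1 + 1 < p.2

/-- every arc lies in a stack of σ parallel arcs ((a,b),(a+1,b-1),…):
every maximal stack has length ≥ σ. -/
def MinStack (σ : ℕ) (A : Finset (ℕ × ℕ)) : Prop :=
  ∀ p ∈ A, ∃ a b : ℕ, (∀ s < σ, (a + s, b - s) ∈ A) ∧ ∃ s < σ, p = (a + s, b - s)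

/-- core condition: no two parallel arcs (i,j), (i+1,j-1). -/
def IsCore (A : Finset (ℕ × ℕ)) : Prop := ∀ p ∈ A, (p.1 + 1, p.2 - 1) ∉ A

/-- k-noncrossing RNA structure on {1,…,n} with minimum stack-length ≥ σ. -/
def RNAStruct (k σ n : ℕ) (A : Finset (ℕ × ℕ)) : Prop :=
  IsPartialMatching n A ∧ ¬ HasKCrossing k A ∧ NoOneArc A ∧ MinStack σ A

/-- T_{k,σ}(n,h): number of k-noncrossing RNA structures on {1,…,n} with
minimum stack-length ≥ σ and h arcs. -/
noncomputable def Tcount (k σ n h : ℕ) : ℕ :=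
  Nat.card {A : Finset (ℕ × ℕ) // RNAStruct k σ n A ∧ A.card = h}

/-- T_{k,σ}(n): number of k-noncrossing RNA structures on {1,…,n} with
minimum stack-length ≥ σ. -/
noncomputable def Ttot (k σ n : ℕ) : ℕ :=
  Nat.card {A : Finset (ℕ × ℕ) // RNAStruct k σ n A}

/-- C_k(n,h): number of k-noncrossing core-structures on {1,…,n} with h arcs. -/
noncomputable def Ccount (k n h : ℕ) : ℕ :=
  Nat.card {A : Finset (ℕ × ℕ) // RNAStruct k 1 n A ∧ IsCore A ∧ A.card = h}

/-- C_k(n): number of k-noncrossing core-structures on {1,…,n}. -/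
noncomputable def Ctot (k n : ℕ) : ℕ :=
  Nat.card {A : Finset (ℕ × ℕ) // RNAStruct k 1 n A ∧ IsCore A}

/-- f_k(n,ℓ): number of k-noncrossing partial matchings of {1,…,n} with
exactly ℓ isolated vertices (1-arcs allowed). -/
noncomputable def fcount (k n ℓ : ℕ) : ℕ :=
  Nat.card {A : Finset (ℕ × ℕ) // IsPartialMatching n A ∧ ¬ HasKCrossing k A ∧
    2 * A.card + ℓ = n}

/-- Binomial coefficient C(t,r) for integer t, with the convention
that it vanishes for t < 0 (and for 0 ≤ t < r via Nat.choose). -/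
def intChoose (t : ℤ) (r : ℕ) : ℕ := if 0 ≤ t then t.toNat.choose r else 0


/-!
Inclusion–exclusion over the 1-arcs: the matchings without 1-arcs number
`∑_S (-1)^|S| · #{A | S ⊆ A}`, where `S` runs over the sets of pairwise disjoint 1-arcs.
For `k ≥ 2` a 1-arc lies in no `k`-crossing, hence
contracting the arcs of `S` (deleting their endpoints and closing the gaps) is a bijection from the
`k`-noncrossing matchings of `[n]` containing `S` onto all `k`-noncrossing matchings of
`[n - 2|S|]` with the same number of isolated vertices. Finally, conditioning on whether `(n-1, n)`
is used gives the recursion `D(n, b) = D(n-1, b) + D(n-2, b-1)` for the number of such `S` with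
`b` arcs, which is solved by `C(n-b, b)`.
-/

open scoped Classical

def arcSetsOn (n : ℕ) : Finset (Finset (ℕ × ℕ)) := (Icc 1 n ×ˢ Icc 1 n).powerset

lemma natCard_subtype_eq_card_filter {α : Type*} {P : α → Prop} [DecidablePred P] (s : Finset α)
    (hs : ∀ a, P a → a ∈ s) : Nat.card {a // P a} = #{a ∈ s | P a} := by
  rw [← Nat.card_eq_finsetCard]
  exact Nat.card_congr <| Equiv.subtypeEquivRight fun a => by
    simp only [mem_filter]
    exact ⟨fun h => ⟨hs a h, h⟩, And.right⟩

lemma minStack_one (A : Finset (ℕ × ℕ)) : MinStack 1 A := fun p hp =>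
  ⟨p.1, p.2, fun s hs => by simpa [Nat.lt_one_iff.1 hs] using hp, 0, Nat.zero_lt_one, by simp⟩

namespace IsPartialMatching

variable {n : ℕ} {A B : Finset (ℕ × ℕ)}

lemma mono (hA : IsPartialMatching n A) (hBA : B ⊆ A) : IsPartialMatching n B :=
  ⟨fun p hp => hA.1 p (hBA hp), fun p hp q hq hpq => hA.2 p (hBA hp) q (hBA hq) hpq⟩

lemma of_le {m : ℕ} (hA : IsPartialMatching n A) (hnm : n ≤ m) : IsPartialMatching m A :=
  ⟨fun p hp => (hA.1 p hp).imp_right fun h => ⟨h.1, h.2.trans hnm⟩, hA.2⟩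

lemma mem_arcSetsOn (hA : IsPartialMatching n A) : A ∈ arcSetsOn n := by
  rw [arcSetsOn, mem_powerset]
  intro p hp
  obtain ⟨h1, h2, h3⟩ := hA.1 p hp
  simp only [mem_product, mem_Icc]
  omega

lemma two_mul_card_le (hA : IsPartialMatching n A) : 2 * #A ≤ n := by
  have hfst : #(A.image Prod.fst) = #A := card_image_of_injOn fun p hp q hq h =>
    by_contra fun hpq => (hA.2 p hp q hq hpq).1 h
  have hsnd : #(A.image Prod.snd) = #A := card_image_of_injOn fun p hp q hq h =>
    by_contra fun hpq => (hA.2 p hp q hq hpq).2.2.2 h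
  have hdisj : Disjoint (A.image Prod.fst) (A.image Prod.snd) := by
    simp only [disjoint_left, mem_image]
    rintro _ ⟨p, hp, rfl⟩ ⟨q, hq, hqp⟩
    by_cases hpq : p = q
    · subst hpq
      exact (hA.1 p hp).2.1.ne hqp.symm
    · exact (hA.2 p hp q hq hpq).2.1 hqp.symm
  have hsub : A.image Prod.fst ∪ A.image Prod.snd ⊆ Icc 1 n := by
    intro x hx
    simp only [mem_union, mem_image] at hx
    rw [mem_Icc]
    rcases hx with ⟨p, hp, rfl⟩ | ⟨p, hp, rfl⟩ <;> have := hA.1 p hp <;> omega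
  calc 2 * #A = #(A.image Prod.fst ∪ A.image Prod.snd) := by
        rw [card_union_of_disjoint hdisj, hfst, hsnd, two_mul]
    _ ≤ #(Icc 1 n) := card_le_card hsub
    _ = n := by simp

lemma insert {p : ℕ × ℕ} (hA : IsPartialMatching n A) (hp : 1 ≤ p.1 ∧ p.1 < p.2 ∧ p.2 ≤ n)
    (hpA : ∀ q ∈ A, q.1 ≠ p.1 ∧ q.1 ≠ p.2 ∧ q.2 ≠ p.1 ∧ q.2 ≠ p.2) :
    IsPartialMatching n (insert p A) := by
  refine ⟨fun q hq => ?_, fun q hq r hr hqr => ?_⟩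
  · rcases mem_insert.1 hq with rfl | hq
    exacts [hp, hA.1 q hq]
  · rcases mem_insert.1 hq with rfl | hqA <;> rcases mem_insert.1 hr with rfl | hrA
    · exact absurd rfl hqr
    · obtain ⟨h1, h2, h3, h4⟩ := hpA r hrA
      exact ⟨h1.symm, h3.symm, h2.symm, h4.symm⟩
    · exact hpA q hqA
    · exact hA.2 q hqA r hrA hqr

lemma image {m : ℕ} {g : ℕ → ℕ} {V : Set ℕ} (hA : IsPartialMatching n A)
    (hg : StrictMonoOn g V) (hAV : (A : Set (ℕ × ℕ)) ⊆ V ×ˢ V)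
    (hgm : ∀ x ∈ V, 1 ≤ g x ∧ g x ≤ m) : IsPartialMatching m (A.image (Prod.map g g)) := by
  refine ⟨?_, ?_⟩
  · simp only [mem_image]
    rintro _ ⟨p, hp, rfl⟩
    obtain ⟨h1, h2⟩ := hAV hp
    exact ⟨(hgm _ h1).1, hg h1 h2 (hA.1 p hp).2.1, (hgm _ h2).2⟩
  · simp only [mem_image]
    rintro _ ⟨p, hp, rfl⟩ _ ⟨q, hq, rfl⟩ hpq
    obtain ⟨hp1, hp2⟩ := hAV hp
    obtain ⟨hq1, hq2⟩ := hAV hq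
    obtain ⟨h11, h12, h21, h22⟩ := hA.2 p hp q hq fun h => hpq (h ▸ rfl)
    exact ⟨hg.injOn.ne hp1 hq1 h11, hg.injOn.ne hp1 hq2 h12, hg.injOn.ne hp2 hq1 h21,
      hg.injOn.ne hp2 hq2 h22⟩

end IsPartialMatching

namespace HasKCrossing

variable {k : ℕ} {A B : Finset (ℕ × ℕ)}

lemma mono (h : HasKCrossing k A) (hAB : A ⊆ B) : HasKCrossing k B :=
  let ⟨f, hf, h1, h2, h3⟩ := h
  ⟨f, fun t => hAB (hf t), h1, h2, h3⟩

/- Every other arc of a crossing family has an endpoint strictly inside a given arc, and a 1-arc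
has no vertex inside it. -/
lemma erase_of_snd_eq_succ (hk : 2 ≤ k) {p : ℕ × ℕ} (hp : p.2 = p.1 + 1)
    (h : HasKCrossing k A) : HasKCrossing k (A.erase p) := by
  obtain ⟨f, hf, h1, h2, h3⟩ := h
  have : Nontrivial (Fin k) := Fin.nontrivial_iff_two_le.2 hk
  refine ⟨f, fun t => mem_erase.2 ⟨fun ht => ?_, hf t⟩, h1, h2, h3⟩
  subst ht
  obtain ⟨s, hst⟩ := exists_ne t
  rcases hst.lt_or_gt with hlt | hgt
  · have : (f s).2 < (f t).2 := h2 hlt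
    have : (f t).1 < (f s).2 := h3 t s
    omega
  · have : (f t).1 < (f s).1 := h1 hgt
    have : (f s).1 < (f t).2 := h3 s t
    omega

lemma of_image {g : ℕ → ℕ} {V : Set ℕ} (hg : StrictMonoOn g V)
    (hAV : (A : Set (ℕ × ℕ)) ⊆ V ×ˢ V) (h : HasKCrossing k (A.image (Prod.map g g))) :
    HasKCrossing k A := by
  obtain ⟨f, hf, h1, h2, h3⟩ := h
  choose f' hf' hff' using fun t => mem_image.1 (hf t)
  obtain rfl : f = fun t => Prod.map g g (f' t) := funext fun t => (hff' t).symm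
  have hV (t : Fin k) : (f' t).1 ∈ V ∧ (f' t).2 ∈ V := hAV (hf' t)
  exact ⟨f', hf', fun s t hst => (hg.lt_iff_lt (hV s).1 (hV t).1).1 (h1 hst),
    fun s t hst => (hg.lt_iff_lt (hV s).2 (hV t).2).1 (h2 hst),
    fun s t => (hg.lt_iff_lt (hV s).1 (hV t).2).1 (h3 s t)⟩

end HasKCrossing

noncomputable def kNoncrossingMatchings (k n ℓ : ℕ) : Finset (Finset (ℕ × ℕ)) :=
  {A ∈ arcSetsOn n | IsPartialMatching n A ∧ ¬ HasKCrossing k A ∧ 2 * #A + ℓ = n}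

lemma mem_kNoncrossingMatchings {k n ℓ : ℕ} {A : Finset (ℕ × ℕ)} :
    A ∈ kNoncrossingMatchings k n ℓ ↔
      IsPartialMatching n A ∧ ¬ HasKCrossing k A ∧ 2 * #A + ℓ = n := by
  rw [kNoncrossingMatchings, mem_filter, and_iff_right_iff_imp]
  exact fun h => h.1.mem_arcSetsOn

lemma fcount_eq_card (k n ℓ : ℕ) : fcount k n ℓ = #(kNoncrossingMatchings k n ℓ) := by
  rw [fcount, kNoncrossingMatchings]
  exact natCard_subtype_eq_card_filter _ fun _ h => h.1.mem_arcSetsOn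

section Contraction

variable {i : ℕ}

def shiftDown (i x : ℕ) : ℕ := if x < i then x else x - 2

def shiftUp (i x : ℕ) : ℕ := if x < i then x else x + 2

lemma shiftDown_shiftUp (x : ℕ) : shiftDown i (shiftUp i x) = x := by
  unfold shiftDown shiftUp
  split_ifs <;> omega

lemma shiftUp_shiftDown {x : ℕ} (hx : x < i ∨ i + 2 ≤ x) : shiftUp i (shiftDown i x) = x := by
  unfold shiftDown shiftUp
  split_ifs <;> omega

lemma shiftUp_lt_or_le (x : ℕ) : shiftUp i x < i ∨ i + 2 ≤ shiftUp i x := by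
  unfold shiftUp
  split_ifs <;> omega

lemma strictMono_shiftUp : StrictMono (shiftUp i) := fun x y hxy => by
  unfold shiftUp
  split_ifs <;> omega

lemma strictMonoOn_shiftDown : StrictMonoOn (shiftDown i) {x | x < i ∨ i + 2 ≤ x} :=
  fun x hx y hy hxy => by
    simp only [Set.mem_ofPred_eq] at hx hy
    unfold shiftDown
    split_ifs <;> omega

lemma prodMap_shiftDown_of_lt {q : ℕ × ℕ} (h1 : q.1 < i) (h2 : q.2 < i) :
    Prod.map (shiftDown i) (shiftDown i) q = q :=
  Prod.ext (if_pos h1) (if_pos h2)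

lemma prodMap_shiftUp_of_lt {q : ℕ × ℕ} (h1 : q.1 < i) (h2 : q.2 < i) :
    Prod.map (shiftUp i) (shiftUp i) q = q :=
  Prod.ext (if_pos h1) (if_pos h2)

lemma oneArc_notMem_image_shiftUp (B : Finset (ℕ × ℕ)) :
    (i, i + 1) ∉ B.image (Prod.map (shiftUp i) (shiftUp i)) := by
  simp only [mem_image, not_exists, not_and]
  intro q _ hq
  have := shiftUp_lt_or_le (i := i) q.1
  have h1 : shiftUp i q.1 = i := congrArg Prod.fst hq
  omega

variable {k n ℓ : ℕ} {A B : Finset (ℕ × ℕ)}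

lemma IsPartialMatching.erase_oneArc_subset (hA : IsPartialMatching n A) (hp : (i, i + 1) ∈ A) :
    (A.erase (i, i + 1) : Set (ℕ × ℕ)) ⊆
      {x | 1 ≤ x ∧ x ≤ n ∧ (x < i ∨ i + 2 ≤ x)} ×ˢ {x | 1 ≤ x ∧ x ≤ n ∧ (x < i ∨ i + 2 ≤ x)} := by
  intro q hq
  obtain ⟨hqp, hqA⟩ := mem_erase.1 hq
  have := hA.1 q hqA
  have := hA.2 q hqA _ hp hqp
  simp only [Set.mem_prod, Set.mem_ofPred_eq]
  omega

lemma image_shiftDown_mem_kNoncrossingMatchings (hA : A ∈ kNoncrossingMatchings k n ℓ)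
    (hp : (i, i + 1) ∈ A) :
    (A.erase (i, i + 1)).image (Prod.map (shiftDown i) (shiftDown i)) ∈
      kNoncrossingMatchings k (n - 2) ℓ := by
  rw [mem_kNoncrossingMatchings] at hA ⊢
  obtain ⟨hM, hK, hcard⟩ := hA
  have hV := hM.erase_oneArc_subset hp
  have hg : StrictMonoOn (shiftDown i) {x | 1 ≤ x ∧ x ≤ n ∧ (x < i ∨ i + 2 ≤ x)} :=
    strictMonoOn_shiftDown.mono fun x hx => hx.2.2
  have hinj : Set.InjOn (Prod.map (shiftDown i) (shiftDown i)) _ :=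
    (hg.injOn.prodMap hg.injOn).mono hV
  have := hM.1 _ hp
  refine ⟨(hM.mono (erase_subset _ _)).image hg hV ?_,
    fun h => hK ((h.of_image hg hV).mono (erase_subset _ _)), ?_⟩
  · rintro x ⟨h1, h2, h3⟩
    unfold shiftDown
    split_ifs <;> omega
  · rw [card_image_of_injOn hinj, card_erase_of_mem hp]
    have := card_pos.2 ⟨_, hp⟩
    omega

lemma insert_image_shiftUp_mem_kNoncrossingMatchings (hk : 2 ≤ k) (hi : 1 ≤ i)
    (hin : i + 1 ≤ n) (hB : B ∈ kNoncrossingMatchings k (n - 2) ℓ) :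
    insert (i, i + 1) (B.image (Prod.map (shiftUp i) (shiftUp i))) ∈
      kNoncrossingMatchings k n ℓ := by
  rw [mem_kNoncrossingMatchings] at hB ⊢
  obtain ⟨hM, hK, hcard⟩ := hB
  have hg : StrictMonoOn (shiftUp i) {x | 1 ≤ x ∧ x ≤ n - 2} := strictMono_shiftUp.strictMonoOn _
  have hV : (B : Set (ℕ × ℕ)) ⊆ {x | 1 ≤ x ∧ x ≤ n - 2} ×ˢ {x | 1 ≤ x ∧ x ≤ n - 2} := by
    intro q hq
    have := hM.1 q hq
    simp only [Set.mem_prod, Set.mem_ofPred_eq]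
    omega
  have hnot := oneArc_notMem_image_shiftUp (i := i) B
  refine ⟨(hM.image hg hV ?_).insert ⟨hi, Nat.lt_succ_self i, hin⟩ ?_, fun h => hK ?_, ?_⟩
  · rintro x ⟨h1, h2⟩
    unfold shiftUp
    split_ifs <;> omega
  · simp only [mem_image]
    rintro _ ⟨q, -, rfl⟩
    have := shiftUp_lt_or_le (i := i) q.1
    have := shiftUp_lt_or_le (i := i) q.2
    simp only [Prod.map_fst, Prod.map_snd]
    omega
  · have := h.erase_of_snd_eq_succ hk (p := (i, i + 1)) rfl
    rw [erase_insert hnot] at this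
    exact this.of_image hg hV
  · rw [card_insert_of_notMem hnot,
      card_image_of_injective _ (strictMono_shiftUp.injective.prodMap strictMono_shiftUp.injective)]
    omega

lemma card_filter_insert_oneArc_subset (hk : 2 ≤ k) (hi : 1 ≤ i) (hin : i + 1 ≤ n)
    {S : Finset (ℕ × ℕ)} (hS : ∀ q ∈ S, q.1 < i ∧ q.2 < i) :
    #{A ∈ kNoncrossingMatchings k n ℓ | insert (i, i + 1) S ⊆ A} =
      #{B ∈ kNoncrossingMatchings k (n - 2) ℓ | S ⊆ B} := by
  apply card_nbij' (fun A => (A.erase (i, i + 1)).image (Prod.map (shiftDown i) (shiftDown i)))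
    (fun B => insert (i, i + 1) (B.image (Prod.map (shiftUp i) (shiftUp i))))
  · intro A hA
    simp only [coe_filter, Set.mem_ofPred_eq, insert_subset_iff] at hA ⊢
    obtain ⟨hA, hp, hSA⟩ := hA
    refine ⟨image_shiftDown_mem_kNoncrossingMatchings hA hp, fun q hq => ?_⟩
    rw [← prodMap_shiftDown_of_lt (hS q hq).1 (hS q hq).2]
    exact mem_image_of_mem _
      (mem_erase.2 ⟨fun h => (hS q hq).1.ne (congrArg Prod.fst h), hSA hq⟩)
  · intro B hB
    simp only [coe_filter, Set.mem_ofPred_eq, insert_subset_iff] at hB ⊢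
    obtain ⟨hB, hSB⟩ := hB
    refine ⟨insert_image_shiftUp_mem_kNoncrossingMatchings hk hi hin hB, mem_insert_self _ _,
      fun q hq => mem_insert_of_mem ?_⟩
    rw [← prodMap_shiftUp_of_lt (hS q hq).1 (hS q hq).2]
    exact mem_image_of_mem _ (hSB hq)
  · intro A hA
    simp only [coe_filter, Set.mem_ofPred_eq, insert_subset_iff, mem_kNoncrossingMatchings] at hA
    obtain ⟨⟨hM, -⟩, hp, -⟩ := hA
    have hV := hM.erase_oneArc_subset hp
    beta_reduce
    rw [image_image, image_congr (g := id), image_id, insert_erase hp]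
    intro q hq
    obtain ⟨⟨-, -, h1⟩, ⟨-, -, h2⟩⟩ := hV hq
    exact Prod.ext (shiftUp_shiftDown h1) (shiftUp_shiftDown h2)
  · intro B _
    have hid : Prod.map (shiftDown i) (shiftDown i) ∘ Prod.map (shiftUp i) (shiftUp i) = id :=
      funext fun q => Prod.ext (shiftDown_shiftUp q.1) (shiftDown_shiftUp q.2)
    beta_reduce
    rw [erase_insert (oneArc_notMem_image_shiftUp B), image_image, hid, image_id]

end Contraction

lemma card_filter_superset_of_oneArcs {k n ℓ : ℕ} (hk : 2 ≤ k) {S : Finset (ℕ × ℕ)}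
    (hM : IsPartialMatching n S) (hone : ∀ q ∈ S, q.2 = q.1 + 1) :
    #{A ∈ kNoncrossingMatchings k n ℓ | S ⊆ A} = #(kNoncrossingMatchings k (n - 2 * #S) ℓ) := by
  induction S using Finset.induction_on_max_value (Prod.fst : ℕ × ℕ → ℕ) generalizing n with
  | empty => simp
  | insert a S haS hmax ih =>
    obtain ⟨i, j⟩ := a
    obtain rfl : j = i + 1 := hone _ (mem_insert_self _ _)
    have hi := hM.1 _ (mem_insert_self _ S)
    have hS : ∀ q ∈ S, q.1 < i ∧ q.2 < i := by
      intro q hq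
      have := hM.2 q (mem_insert_of_mem hq) _ (mem_insert_self _ S) (ne_of_mem_of_not_mem hq haS)
      have := hmax q hq
      have := hone q (mem_insert_of_mem hq)
      omega
    have hM' : IsPartialMatching (n - 2) S := by
      refine ⟨fun q hq => ?_, (hM.mono (subset_insert _ S)).2⟩
      have := hM.1 q (mem_insert_of_mem hq)
      have := hS q hq
      omega
    rw [card_filter_insert_oneArc_subset hk hi.1 hi.2.2 hS,
      ih hM' fun q hq => hone q (mem_insert_of_mem hq), card_insert_of_notMem haS]
    congr 2
    omega

noncomputable def oneArcMatchings (n : ℕ) : Finset (Finset (ℕ × ℕ)) :=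
  {S ∈ arcSetsOn n | IsPartialMatching n S ∧ ∀ q ∈ S, q.2 = q.1 + 1}

lemma mem_oneArcMatchings {n : ℕ} {S : Finset (ℕ × ℕ)} :
    S ∈ oneArcMatchings n ↔ IsPartialMatching n S ∧ ∀ q ∈ S, q.2 = q.1 + 1 := by
  rw [oneArcMatchings, mem_filter, and_iff_right_iff_imp]
  exact fun h => h.1.mem_arcSetsOn

lemma filter_notMem_oneArcMatchings_add_two (n b : ℕ) :
    {S ∈ oneArcMatchings (n + 2) | #S = b ∧ (n + 1, n + 2) ∉ S} =
      {S ∈ oneArcMatchings (n + 1) | #S = b} := by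
  ext S
  simp only [mem_filter, mem_oneArcMatchings]
  constructor
  · rintro ⟨⟨hM, hone⟩, hb, hS⟩
    refine ⟨⟨⟨fun q hq => ?_, hM.2⟩, hone⟩, hb⟩
    have := hM.1 q hq
    have := hone q hq
    refine ⟨by omega, by omega, Nat.le_of_not_lt fun h => hS ?_⟩
    rwa [show q = (n + 1, n + 2) from Prod.ext (by omega) (by omega)] at hq
  · rintro ⟨⟨hM, hone⟩, hb⟩
    exact ⟨⟨hM.of_le (by omega), hone⟩, hb, fun h => by have := (hM.1 _ h).2.2; omega⟩

lemma card_filter_mem_oneArcMatchings_add_two (n b : ℕ) :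
    #{S ∈ oneArcMatchings (n + 2) | #S = b + 1 ∧ (n + 1, n + 2) ∈ S} =
      #{S ∈ oneArcMatchings n | #S = b} := by
  apply card_nbij' (fun S => S.erase (n + 1, n + 2)) (fun S => insert (n + 1, n + 2) S)
  · intro S hS
    simp only [coe_filter, mem_oneArcMatchings, Set.mem_ofPred_eq] at hS ⊢
    obtain ⟨⟨hM, hone⟩, hb, he⟩ := hS
    refine ⟨⟨⟨fun q hq => ?_, (hM.mono (erase_subset _ _)).2⟩,
      fun q hq => hone q (mem_of_mem_erase hq)⟩,
      by rw [card_erase_of_mem he, hb, Nat.add_sub_cancel]⟩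
    obtain ⟨hqe, hqS⟩ := mem_erase.1 hq
    have := hM.1 q hqS
    have := hM.2 q hqS _ he hqe
    have := hone q hqS
    omega
  · intro S hS
    simp only [coe_filter, mem_oneArcMatchings, Set.mem_ofPred_eq] at hS ⊢
    obtain ⟨⟨hM, hone⟩, hb⟩ := hS
    have he : (n + 1, n + 2) ∉ S := fun h => by have := (hM.1 _ h).2.2; omega
    refine ⟨⟨(hM.of_le (by omega)).insert (by omega) fun q hq => ?_, fun q hq => ?_⟩,
      by rw [card_insert_of_notMem he, hb], mem_insert_self _ _⟩
    · have := hM.1 q hq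
      omega
    · rcases mem_insert.1 hq with rfl | hq
      exacts [rfl, hone q hq]
  · intro S hS
    exact insert_erase (mem_filter.1 hS).2.2
  · intro S hS
    simp only [coe_filter, mem_oneArcMatchings, Set.mem_ofPred_eq] at hS
    exact erase_insert fun h => by have := (hS.1.1.1 _ h).2.2; omega

lemma card_filter_oneArcMatchings_card_eq : ∀ n b : ℕ,
    #{S ∈ oneArcMatchings n | #S = b} = (n - b).choose b
  | n, 0 => by
    have : {S ∈ oneArcMatchings n | #S = 0} = {∅} := by
      ext S
      simp only [mem_filter, mem_oneArcMatchings, card_eq_zero, mem_singleton,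
        and_iff_right_iff_imp]
      rintro rfl
      simp [IsPartialMatching]
    rw [this, card_singleton, Nat.choose_zero_right]
  | n + 2, b + 1 => by
    rw [← card_filter_add_card_filter_not (p := fun S => (n + 1, n + 2) ∈ S), filter_filter,
      filter_filter, card_filter_mem_oneArcMatchings_add_two, filter_notMem_oneArcMatchings_add_two,
      card_filter_oneArcMatchings_card_eq n b, card_filter_oneArcMatchings_card_eq (n + 1) (b + 1)]
    rcases le_or_gt b n with hbn | hnb
    · rw [show n + 2 - (b + 1) = n - b + 1 by omega, show n + 1 - (b + 1) = n - b by omega,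
        Nat.choose_succ_succ, add_comm]
    · obtain ⟨c, rfl⟩ : ∃ c, b = c + 1 := ⟨b - 1, by omega⟩
      simp [show n + 2 - (c + 1 + 1) = 0 by omega, show n + 1 - (c + 1 + 1) = 0 by omega,
        show n - (c + 1) = 0 by omega]
  | 0, b + 1 | 1, b + 1 => by
    rw [Nat.choose_eq_zero_of_lt (by omega), card_eq_zero, filter_eq_empty_iff]
    intro S hS hb
    have := (mem_oneArcMatchings.1 hS).1.two_mul_card_le
    omega

lemma sum_oneArcMatchings_eq_sum_range {M : Type*} [AddCommMonoid M] (n : ℕ) (f : ℕ → M) :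
    ∑ S ∈ oneArcMatchings n, f #S = ∑ b ∈ range (n / 2 + 1), (n - b).choose b • f b := by
  rw [← sum_fiberwise_of_maps_to (t := range (n / 2 + 1)) (g := card) fun S hS => ?_]
  · refine sum_congr rfl fun b _ => ?_
    rw [sum_congr rfl fun S hS => by rw [(mem_filter.1 hS).2], sum_const,
      card_filter_oneArcMatchings_card_eq]
  · have := (mem_oneArcMatchings.1 hS).1.two_mul_card_le
    rw [mem_range]
    omega

lemma card_filter_noOneArc_eq_sum {n : ℕ} (M : Finset (Finset (ℕ × ℕ)))
    (hM : ∀ A ∈ M, IsPartialMatching n A) :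
    (#{A ∈ M | NoOneArc A} : ℤ) =
      ∑ S ∈ oneArcMatchings n, (-1 : ℤ) ^ #S * (#{A ∈ M | S ⊆ A} : ℤ) := by
  have hind (A) (hA : A ∈ M) : (if NoOneArc A then 1 else 0 : ℤ) =
      ∑ S ∈ {q ∈ A | q.2 = q.1 + 1}.powerset, (-1 : ℤ) ^ #S := by
    rw [sum_powerset_neg_one_pow_card]
    refine if_congr (Iff.trans ⟨fun h q hq => ?_, fun h q hq => ?_⟩ filter_eq_empty_iff.symm)
      rfl rfl
    · have := h q hq
      omega
    · have := (hM A hA).1 q hq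
      have := h hq
      omega
  calc (#{A ∈ M | NoOneArc A} : ℤ) = ∑ A ∈ M, if NoOneArc A then 1 else 0 := by
        rw [sum_boole]
    _ = ∑ A ∈ M, ∑ S ∈ {q ∈ A | q.2 = q.1 + 1}.powerset, (-1 : ℤ) ^ #S := sum_congr rfl hind
    _ = ∑ S ∈ oneArcMatchings n, ∑ A ∈ {A ∈ M | S ⊆ A}, (-1 : ℤ) ^ #S := by
        refine sum_comm' fun A S => ?_
        simp only [mem_powerset, mem_filter, mem_oneArcMatchings, subset_iff]
        constructor
        · rintro ⟨hA, hS⟩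
          exact ⟨⟨hA, fun q hq => (hS hq).1⟩, (hM A hA).mono fun q hq => (hS hq).1,
            fun q hq => (hS hq).2⟩
        · rintro ⟨⟨hA, hSA⟩, -, hone⟩
          exact ⟨hA, fun q hq => ⟨hSA hq, hone q hq⟩⟩
    _ = ∑ S ∈ oneArcMatchings n, (-1 : ℤ) ^ #S * (#{A ∈ M | S ⊆ A} : ℤ) := by
        simp only [sum_const, nsmul_eq_mul, mul_comm]

lemma Tcount_one_eq_card_filter_noOneArc {k n ℓ : ℕ} (h1 : ℓ ≤ n) (h2 : 2 ∣ n - ℓ) :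
    Tcount k 1 n ((n - ℓ) / 2) = #{A ∈ kNoncrossingMatchings k n ℓ | NoOneArc A} := by
  rw [Tcount, natCard_subtype_eq_card_filter (arcSetsOn n) fun A hA => hA.1.1.mem_arcSetsOn,
    kNoncrossingMatchings, filter_filter]
  refine congrArg card (filter_congr fun A _ => ?_)
  have hcard : #A = (n - ℓ) / 2 ↔ 2 * #A + ℓ = n := by omega
  simp only [RNAStruct, minStack_one, and_true, hcard]
  tauto

/-- T_{k,1}(n, (n-ℓ)/2) = Σ_{b=0}^{⌊n/2⌋} (-1)^b C(n-b, b)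
f_k(n-2b, ℓ). -/
theorem stmt17 (k n ℓ : ℕ) (hk : 2 ≤ k) (h1 : ℓ ≤ n) (h2 : 2 ∣ (n - ℓ)) :
    (Tcount k 1 n ((n - ℓ) / 2) : ℤ) = ∑ b ∈ Finset.range (n / 2 + 1),
      (-1 : ℤ) ^ b * (Nat.choose (n - b) b : ℤ) * (fcount k (n - 2 * b) ℓ : ℤ) := by
  rw [Tcount_one_eq_card_filter_noOneArc h1 h2,
    card_filter_noOneArc_eq_sum _ fun A hA => (mem_kNoncrossingMatchings.1 hA).1]
  calc ∑ S ∈ oneArcMatchings n, (-1 : ℤ) ^ #S * #{A ∈ kNoncrossingMatchings k n ℓ | S ⊆ A}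
      = ∑ S ∈ oneArcMatchings n, (-1 : ℤ) ^ #S * fcount k (n - 2 * #S) ℓ := by
        refine sum_congr rfl fun S hS => ?_
        obtain ⟨hM, hone⟩ := mem_oneArcMatchings.1 hS
        rw [fcount_eq_card, card_filter_superset_of_oneArcs hk hM hone]
    _ = _ := by
        rw [sum_oneArcMatchings_eq_sum_range n fun b => (-1 : ℤ) ^ b * fcount k (n - 2 * b) ℓ]
        exact sum_congr rfl fun b _ => by rw [nsmul_eq_mul, mul_left_comm, mul_assoc]
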